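/- arXiv:2108.07957 — 3 statements merged into one kernel-verified Lean document; each statement's English description precedes it below -/
import Mathlib

section
/- Let V be a finite-dimensional ℚ-vector space and ψ : V → V a ℚ-linear map whose characteristic polynomial f has distinct complex roots (f is separable). Let K ⊆ ℂ be the splitting field of f over ℚ and assume Gal(K/ℚ) acts transitively on the set of complex roots of f. Suppose ℂ ⊗[ℚ] V = U ⊕ U′ is an internal direct sum of two ℂ-subspaces, each invariant under the base-changed endomorphism ψ_ℂ of ℂ ⊗[ℚ] V, with U ≠ 0. Then every ψ-invariant ℚ-subspace W ⊆ V whose canonical image in ℂ ⊗[ℚ] V is contained in U′ is the zero subspace. -/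
/-!
If `W ≠ 0` is `ψ`-invariant, the minimal polynomial of `ψ|W` divides the characteristic polynomial
`f` of `ψ` and has a complex root, which is a root of `f`. A Galois automorphism sends a root of a
rational polynomial to a root of the same polynomial, so by transitivity every root of `f` is a root
of that minimal polynomial. As `f` has `dim V` distinct roots, `dim V ≤ dim W`, so `W = V`. Then
`ℂ ⊗ V`, spanned by the `1 ⊗ w`, lies in `U′`, which forces `U = 0`.
-/

open Polynomial IntermediateField
open scoped TensorProduct

namespace LinearMap

theorem aeval_restrict_apply {R M : Type*} [CommSemiring R] [AddCommMonoid M] [Module R M]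
    (f : Module.End R M) {p : Submodule R M} (hp : ∀ x ∈ p, f x ∈ p) (q : R[X]) (x : p) :
    (aeval (f.restrict hp) q x : M) = aeval f q x := by
  induction q using Polynomial.induction_on' with
  | add q r hq hr => simp [hq, hr]
  | monomial n c => simp [aeval_monomial, Module.End.pow_restrict n hp, restrict_apply]

theorem minpoly_restrict_dvd_charpoly {K M : Type*} [Field K] [AddCommGroup M] [Module K M]
    [FiniteDimensional K M] (f : Module.End K M) {p : Submodule K M} (hp : ∀ x ∈ p, f x ∈ p) :
    minpoly K (f.restrict hp) ∣ f.charpoly := by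
  refine (minpoly.dvd K _ ?_).trans f.minpoly_dvd_charpoly
  ext x
  simp [aeval_restrict_apply]

end LinearMap

theorem Submodule.baseChange_le_of_one_tmul_mem {R A M : Type*} [CommSemiring R] [Semiring A]
    [Algebra R A] [AddCommMonoid M] [Module R M] {p : Submodule R M}
    {N : Submodule A (A ⊗[R] M)} (h : ∀ m ∈ p, (1 : A) ⊗ₜ[R] m ∈ N) : p.baseChange A ≤ N := by
  rw [baseChange_eq_span, span_le]
  rintro _ ⟨m, hm, rfl⟩
  exact h m hm

namespace Polynomial

variable {F L : Type*} [Field F] [Field L] [Algebra F L]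

theorem aeval_eq_zero_of_mem_rootSet_of_transitive {f g : F[X]}
    (hgal : ∀ a : L, ∀ ha : a ∈ f.rootSet L, ∀ b ∈ f.rootSet L,
      ∃ σ : (adjoin F (f.rootSet L)) ≃ₐ[F] (adjoin F (f.rootSet L)),
        (σ ⟨a, subset_adjoin F _ ha⟩ : L) = b)
    {a b : L} (ha : a ∈ f.rootSet L) (hb : b ∈ f.rootSet L) (hag : aeval a g = 0) :
    aeval b g = 0 := by
  obtain ⟨σ, rfl⟩ := hgal a ha b hb
  have hag' : aeval (⟨a, subset_adjoin F _ ha⟩ : adjoin F (f.rootSet L)) g = 0 :=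
    Subtype.val_injective ((IntermediateField.aeval_coe _ _ g).symm.trans hag)
  rw [IntermediateField.aeval_coe, aeval_algEquiv, AlgHom.comp_apply, hag', map_zero,
    ZeroMemClass.coe_zero]

theorem natDegree_le_of_rootSet_subset [IsAlgClosed L] {f g : F[X]}
    (hf : (f.map (algebraMap F L)).roots.Nodup) (h : f.rootSet L ⊆ g.rootSet L) :
    f.natDegree ≤ g.natDegree := by
  have hroots : (f.map (algebraMap F L)).roots ≤ (g.map (algebraMap F L)).roots := by
    classical
    refine (Multiset.le_iff_subset hf).2 fun x hx => ?_
    simpa [rootSet_def] using h (by simpa [rootSet_def] using hx)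
  calc f.natDegree = (f.map (algebraMap F L)).roots.card :=
        (IsAlgClosed.card_roots_map_eq_natDegree_of_injective f (algebraMap F L).injective).symm
    _ ≤ (g.map (algebraMap F L)).roots.card := Multiset.card_le_card hroots
    _ ≤ (g.map (algebraMap F L)).natDegree := card_roots' _
    _ = g.natDegree := natDegree_map _

end Polynomial

theorem LinearMap.eq_top_of_invariant_of_charpoly_transitive {F L V : Type*} [Field F] [Field L]
    [Algebra F L] [IsAlgClosed L] [AddCommGroup V] [Module F V] [FiniteDimensional F V]
    (ψ : Module.End F V) (hnodup : (ψ.charpoly.map (algebraMap F L)).roots.Nodup)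
    (hgal : ∀ a : L, ∀ ha : a ∈ ψ.charpoly.rootSet L, ∀ b ∈ ψ.charpoly.rootSet L,
      ∃ σ : (adjoin F (ψ.charpoly.rootSet L)) ≃ₐ[F] (adjoin F (ψ.charpoly.rootSet L)),
        (σ ⟨a, subset_adjoin F _ ha⟩ : L) = b)
    {W : Submodule F V} (hW : ∀ w ∈ W, ψ w ∈ W) (hW₀ : W ≠ ⊥) : W = ⊤ := by
  have : Nontrivial W := Submodule.nontrivial_iff_ne_bot.mpr hW₀
  set φ := ψ.restrict hW
  have hφ : IsIntegral F φ := φ.isIntegral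
  have hdvd : minpoly F φ ∣ ψ.charpoly := ψ.minpoly_restrict_dvd_charpoly hW
  obtain ⟨a, ha⟩ := IsAlgClosed.exists_aeval_eq_zero L (minpoly F φ) (minpoly.degree_pos hφ).ne'
  have haψ : a ∈ ψ.charpoly.rootSet L :=
    mem_rootSet.2 ⟨ψ.charpoly_monic.ne_zero, aeval_eq_zero_of_dvd_aeval_eq_zero hdvd ha⟩
  have hdeg : ψ.charpoly.natDegree ≤ (minpoly F φ).natDegree :=
    natDegree_le_of_rootSet_subset hnodup fun b hb =>
      mem_rootSet.2 ⟨minpoly.ne_zero hφ, aeval_eq_zero_of_mem_rootSet_of_transitive hgal haψ hb ha⟩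
  have hdegφ : (minpoly F φ).natDegree ≤ φ.charpoly.natDegree :=
    natDegree_le_of_dvd φ.minpoly_dvd_charpoly φ.charpoly_monic.ne_zero
  rw [ψ.charpoly_natDegree] at hdeg
  rw [φ.charpoly_natDegree] at hdegφ
  exact Submodule.eq_top_of_finrank_eq (le_antisymm W.finrank_le (hdeg.trans hdegφ))

theorem invariant_subspace_in_complement_is_zero_general
    (V : Type*) [AddCommGroup V] [Module ℚ V] [FiniteDimensional ℚ V]
    (ψ : V →ₗ[ℚ] V)
    -- the characteristic polynomial has distinct complex roots
    (hnodup : ((ψ.charpoly.map (algebraMap ℚ ℂ)).roots).Nodup)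
    -- `Gal(K/ℚ)` acts transitively on the set of complex roots, where `K ⊆ ℂ` is the
    -- splitting field of the characteristic polynomial
    (hgal : ∀ a : ℂ, ∀ ha : a ∈ ψ.charpoly.rootSet ℂ, ∀ b ∈ ψ.charpoly.rootSet ℂ,
      ∃ σ : (adjoin ℚ (ψ.charpoly.rootSet ℂ)) ≃ₐ[ℚ] (adjoin ℚ (ψ.charpoly.rootSet ℂ)),
        (σ ⟨a, subset_adjoin ℚ _ ha⟩ : ℂ) = b)
    -- `ℂ ⊗[ℚ] V = U ⊕ U′`, both invariant under the base change of `ψ`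
    (U U' : Submodule ℂ (ℂ ⊗[ℚ] V))
    (hcompl : IsCompl U U')
    (hU : U ≠ ⊥) :
    ∀ W : Submodule ℚ V, (∀ w ∈ W, ψ w ∈ W) →
      (∀ w ∈ W, (1 : ℂ) ⊗ₜ[ℚ] w ∈ U') → W = ⊥ := by
  intro W hW hWU'
  by_contra hW₀
  have hWtop : W = ⊤ := ψ.eq_top_of_invariant_of_charpoly_transitive hnodup hgal hW hW₀
  have hU'top : U' = ⊤ := by
    rw [eq_top_iff, ← Submodule.baseChange_top ℂ, ← hWtop]
    exact Submodule.baseChange_le_of_one_tmul_mem hWU'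
  exact hU (eq_bot_of_isCompl_top (hU'top ▸ hcompl))

/-- Galois-theoretic engine of the proof of Lemma 1: if the Galois group of
the characteristic polynomial of `ψ` acts transitively on its (distinct) complex roots, and
`ℂ ⊗[ℚ] V = U ⊕ U′` with both summands invariant under `ψ_ℂ` and `U ≠ 0`, then any
`ψ`-invariant rational subspace `W ⊆ V` whose complexification lies in `U′` is zero. -/
theorem invariant_subspace_in_complement_is_zero
    (V : Type*) [AddCommGroup V] [Module ℚ V] [FiniteDimensional ℚ V]
    (ψ : V →ₗ[ℚ] V)
    -- the characteristic polynomial has distinct complex roots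
    (hnodup : ((ψ.charpoly.map (algebraMap ℚ ℂ)).roots).Nodup)
    -- `Gal(K/ℚ)` acts transitively on the set of complex roots, where `K ⊆ ℂ` is the
    -- splitting field of the characteristic polynomial
    (hgal : ∀ a : ℂ, ∀ ha : a ∈ ψ.charpoly.rootSet ℂ, ∀ b ∈ ψ.charpoly.rootSet ℂ,
      ∃ σ : (adjoin ℚ (ψ.charpoly.rootSet ℂ)) ≃ₐ[ℚ] (adjoin ℚ (ψ.charpoly.rootSet ℂ)),
        (σ ⟨a, subset_adjoin ℚ _ ha⟩ : ℂ) = b)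
    -- `ℂ ⊗[ℚ] V = U ⊕ U′`, both invariant under the base change of `ψ`
    (U U' : Submodule ℂ (ℂ ⊗[ℚ] V))
    (hcompl : IsCompl U U')
    (hinvU : ∀ x ∈ U, LinearMap.baseChange ℂ ψ x ∈ U)
    (hinvU' : ∀ x ∈ U', LinearMap.baseChange ℂ ψ x ∈ U')
    (hU : U ≠ ⊥) :
    ∀ W : Submodule ℚ V, (∀ w ∈ W, ψ w ∈ W) →
      (∀ w ∈ W, (1 : ℂ) ⊗ₜ[ℚ] w ∈ U') → W = ⊥ :=
  invariant_subspace_in_complement_is_zero_general V ψ hnodup hgal U U' hcompl hU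
end

section
/- Let f ∈ ℚ[X] be a polynomial of degree m ≥ 4 with m distinct complex roots and f(0) ≠ 0. Let K ⊆ ℂ be the splitting field of f over ℚ and R ⊆ K its set of roots. Assume every permutation of R is induced by some element of Gal(K/ℚ). Then products of pairs of distinct roots determine the pair: for all a, b, c, d ∈ R with a ≠ b and c ≠ d, if a·b = c·d then {a, b} = {c, d}. -/
/-!
A Galois automorphism inducing a permutation `π` of the roots carries a relation `a * b = c * d`
to `π a * π b = π c * π d`. If `{a, b}` and `{c, d}` share a root, cancelling it (roots are
nonzero as `f(0) ≠ 0`) gives the claim. Otherwise the four roots are distinct, and applying the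
transpositions `(b c)` and `(b d)` yields `a * c = b * d` and `a * d = c * b`; together with
`a * b = c * d` these give `a ^ 2 = c ^ 2 = d ^ 2`, whence `c = -a = d`, a contradiction.
-/

open Polynomial IntermediateField

theorem Polynomial.zero_notMem_rootSet {F K : Type*} [Field F] [CommRing K] [IsDomain K]
    [Algebra F K] {p : F[X]} (hp : p.coeff 0 ≠ 0) : (0 : K) ∉ p.rootSet K := by
  rw [mem_rootSet, aeval_def, eval₂_at_zero, map_eq_zero]
  exact fun h => hp h.2

theorem IntermediateField.mul_eq_mul_of_algEquiv_adjoin {F K : Type*} [Field F] [Field K]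
    [Algebra F K] {s : Set K} (σ : adjoin F s ≃ₐ[F] adjoin F s) {π : Equiv.Perm s}
    (hσ : ∀ r : s, (σ ⟨r.1, subset_adjoin F s r.2⟩ : K) = π r) {a b c d : s}
    (h : (a : K) * b = c * d) : (π a : K) * π b = π c * π d := by
  have hprod : (⟨a, subset_adjoin F s a.2⟩ * ⟨b, subset_adjoin F s b.2⟩ : adjoin F s) =
      ⟨c, subset_adjoin F s c.2⟩ * ⟨d, subset_adjoin F s d.2⟩ := Subtype.ext h
  simpa only [map_mul, MulMemClass.coe_mul, hσ] using congrArg (fun x => (σ x : K)) hprod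

section

variable {R : Type*} [CommRing R] [IsDomain R]

theorem eq_of_mul_eq_mul_of_swaps {a b c d : R} (hb : b ≠ 0) (hc : c ≠ 0)
    (hd : d ≠ 0) (hac : a ≠ c) (had : a ≠ d) (h₁ : a * b = c * d) (h₂ : a * c = b * d)
    (h₃ : a * d = c * b) : c = d := by
  have had' : a * a = d * d :=
    mul_right_cancel₀ (mul_ne_zero hb hc) (by linear_combination (a * c) * h₁ + (c * d) * h₂)
  have hac' : a * a = c * c :=
    mul_right_cancel₀ (mul_ne_zero hb hd) (by linear_combination (a * d) * h₁ + (c * d) * h₃)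
  have hd_neg : a = -d := (mul_self_eq_mul_self_iff.mp had').resolve_left had
  have hc_neg : a = -c := (mul_self_eq_mul_self_iff.mp hac').resolve_left hac
  exact neg_injective (hc_neg.symm.trans hd_neg)

theorem pair_eq_of_mul_eq_mul_of_eq_or_eq {a b c d : R} (ha : a ≠ 0) (h : a * b = c * d)
    (hacd : a = c ∨ a = d) : ({a, b} : Set R) = {c, d} := by
  rcases hacd with rfl | rfl
  · rw [mul_left_cancel₀ ha h]
  · rw [mul_left_cancel₀ ha (h.trans (mul_comm _ _)), Set.pair_comm]

theorem pair_eq_of_mul_eq_mul_of_perm_invariant {s : Set R} (hs : 0 ∉ s)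
    (hinv : ∀ (π : Equiv.Perm s) (a b c d : s),
      (a : R) * b = c * d → (π a : R) * π b = π c * π d)
    {a b c d : R} (ha : a ∈ s) (hb : b ∈ s) (hc : c ∈ s) (hd : d ∈ s) (hab : a ≠ b)
    (hcd : c ≠ d) (h : a * b = c * d) : ({a, b} : Set R) = {c, d} := by
  classical
  have hne : ∀ x ∈ s, x ≠ 0 := fun x hx h0 => hs (h0 ▸ hx)
  by_cases hacd : a = c ∨ a = d
  · exact pair_eq_of_mul_eq_mul_of_eq_or_eq (hne a ha) h hacd
  by_cases hbcd : b = c ∨ b = d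
  · rw [Set.pair_comm]
    exact pair_eq_of_mul_eq_mul_of_eq_or_eq (hne b hb) ((mul_comm b a).trans h) hbcd
  push Not at hacd hbcd
  have hswap := fun x y => hinv (Equiv.swap x y) ⟨a, ha⟩ ⟨b, hb⟩ ⟨c, hc⟩ ⟨d, hd⟩ h
  have h₂ : a * c = b * d := by
    simpa [Equiv.swap_apply_def, hab, hacd, hbcd, Ne.symm hbcd.1, Ne.symm hbcd.2, hcd,
      Ne.symm hcd] using hswap ⟨b, hb⟩ ⟨c, hc⟩
  have h₃ : a * d = c * b := by
    simpa [Equiv.swap_apply_def, hab, hacd, hbcd, Ne.symm hbcd.1, Ne.symm hbcd.2, hcd,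
      Ne.symm hcd] using hswap ⟨b, hb⟩ ⟨d, hd⟩
  exact absurd (eq_of_mul_eq_mul_of_swaps (hne b hb) (hne c hc) (hne d hd)
    hacd.1 hacd.2 h h₂ h₃) hcd

end

theorem products_of_distinct_roots_determine_pair_general
    (f : Polynomial ℚ)
    -- `f(0) ≠ 0`
    (h0 : f.eval 0 ≠ 0)
    -- every permutation of the root set is induced by an element of `Gal(K/ℚ)`, where
    -- `K ⊆ ℂ` is the splitting field of `f` over `ℚ`
    (hgal : ∀ π : Equiv.Perm (f.rootSet ℂ),
      ∃ σ : (adjoin ℚ (f.rootSet ℂ)) ≃ₐ[ℚ] (adjoin ℚ (f.rootSet ℂ)),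
        ∀ r : f.rootSet ℂ, (σ ⟨r.1, subset_adjoin ℚ _ r.2⟩ : ℂ) = (π r : ℂ)) :
    ∀ a ∈ f.rootSet ℂ, ∀ b ∈ f.rootSet ℂ, ∀ c ∈ f.rootSet ℂ, ∀ d ∈ f.rootSet ℂ,
      a ≠ b → c ≠ d → a * b = c * d → ({a, b} : Set ℂ) = {c, d} := by
  intro a ha b hb c hc d hd
  refine pair_eq_of_mul_eq_mul_of_perm_invariant
    (zero_notMem_rootSet (by rwa [coeff_zero_eq_eval_zero])) (fun π x y z w hxyzw => ?_)
    ha hb hc hd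
  obtain ⟨σ, hσ⟩ := hgal π
  exact mul_eq_mul_of_algEquiv_adjoin σ hσ hxyzw

/-- claim in the proof of Lemma 1: for a polynomial `f ∈ ℚ[X]` of degree
`m ≥ 4` with `m` distinct complex roots, `f(0) ≠ 0`, and Galois group the full symmetric group
on the roots, products of pairs of distinct roots determine the pair. -/
theorem products_of_distinct_roots_determine_pair
    (f : Polynomial ℚ) (m : ℕ) (hm : 4 ≤ m) (hdeg : f.natDegree = m)
    -- `f` has `m` distinct complex roots
    (hnodup : ((f.map (algebraMap ℚ ℂ)).roots).Nodup)
    (hcard : ((f.map (algebraMap ℚ ℂ)).roots).card = m)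
    -- `f(0) ≠ 0`
    (h0 : f.eval 0 ≠ 0)
    -- every permutation of the root set is induced by an element of `Gal(K/ℚ)`, where
    -- `K ⊆ ℂ` is the splitting field of `f` over `ℚ`
    (hgal : ∀ π : Equiv.Perm (f.rootSet ℂ),
      ∃ σ : (adjoin ℚ (f.rootSet ℂ)) ≃ₐ[ℚ] (adjoin ℚ (f.rootSet ℂ)),
        ∀ r : f.rootSet ℂ, (σ ⟨r.1, subset_adjoin ℚ _ r.2⟩ : ℂ) = (π r : ℂ)) :
    ∀ a ∈ f.rootSet ℂ, ∀ b ∈ f.rootSet ℂ, ∀ c ∈ f.rootSet ℂ, ∀ d ∈ f.rootSet ℂ,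
      a ≠ b → c ≠ d → a * b = c * d → ({a, b} : Set ℂ) = {c, d} :=
  products_of_distinct_roots_determine_pair_general f h0 hgal
end

section
/- Fix a natural number k and a finite index set I of pairs (p, q) of natural numbers with p + q = k. Let M be a ℂ-vector space which is the internal direct sum of subspaces M^{p,q} indexed by (p, q) ∈ I, with associated projections π^{p,q} : M → M^{p,q}. Let B ⊆ M be a ℂ-subspace such that for every z ∈ ℂ with z ≠ 0 and every b ∈ B, the element Σ_{(p,q)∈I} z^p · conj(z)^q · π^{p,q}(b) again lies in B. Then π^{p,q}(b) ∈ B for every b ∈ B and every (p, q) ∈ I; equivalently, B is the direct sum of its intersections B ∩ M^{p,q}. -/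
/-!
For `z ≠ 0` the operator `Σ z^p conj(z)^q π^{p,q}` acts on `M^{p,q}` by the scalar
`z^p conj(z)^q`, so `B` is stable under every diagonal operator `Σ ν(p,q) π^{p,q}` whose weight
function `ν` lies in the algebra generated by these characters. Evaluated at roots of unity, the
characters separate the finitely many indices of the same total degree, so this algebra contains,
for each `(p,q)`, a Lagrange-type function vanishing on all other indices but not at `(p,q)`;
its diagonal operator is a nonzero multiple of `π^{p,q}`.
-/

open scoped ComplexConjugate

open Finset

section DiagonalOp

variable {ι R M : Type*} [CommSemiring R] [AddCommMonoid M] [Module R M]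

def diagonalOp (I : Finset ι) (π : ι → Module.End R M) (μ : ι → R) : Module.End R M :=
  ∑ i ∈ I, μ i • π i

variable {I : Finset ι} {π : ι → Module.End R M}

theorem diagonalOp_apply (μ : ι → R) (x : M) :
    diagonalOp I π μ x = ∑ i ∈ I, μ i • π i x := by
  simp [diagonalOp, LinearMap.sum_apply]

theorem diagonalOp_add (μ ν : ι → R) :
    diagonalOp I π (μ + ν) = diagonalOp I π μ + diagonalOp I π ν := by
  simp only [diagonalOp, Pi.add_apply, add_smul, sum_add_distrib]

theorem diagonalOp_algebraMap (hsum : ∀ x, ∑ i ∈ I, π i x = x) (c : R) :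
    diagonalOp I π (algebraMap R (ι → R) c) = algebraMap R (Module.End R M) c := by
  ext x
  simp [diagonalOp_apply, ← smul_sum, hsum]

theorem proj_diagonalOp (hidem : ∀ i ∈ I, ∀ x, π i (π i x) = π i x)
    (horth : ∀ i ∈ I, ∀ j ∈ I, i ≠ j → ∀ x, π i (π j x) = 0) {i : ι} (hi : i ∈ I)
    (μ : ι → R) (x : M) :
    π i (diagonalOp I π μ x) = μ i • π i x := by
  rw [diagonalOp_apply, map_sum, sum_eq_single_of_mem i hi, map_smul, hidem i hi]
  intro j hj hji
  rw [map_smul, horth i hi j hj hji.symm, smul_zero]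

theorem diagonalOp_mul (hidem : ∀ i ∈ I, ∀ x, π i (π i x) = π i x)
    (horth : ∀ i ∈ I, ∀ j ∈ I, i ≠ j → ∀ x, π i (π j x) = 0) (μ ν : ι → R) :
    diagonalOp I π (μ * ν) = diagonalOp I π μ * diagonalOp I π ν := by
  ext x
  rw [Module.End.mul_apply, diagonalOp_apply, diagonalOp_apply μ]
  refine sum_congr rfl fun i hi => ?_
  rw [proj_diagonalOp hidem horth hi, Pi.mul_apply, mul_smul]

theorem diagonalOp_mem_of_mem_adjoin (hidem : ∀ i ∈ I, ∀ x, π i (π i x) = π i x)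
    (horth : ∀ i ∈ I, ∀ j ∈ I, i ≠ j → ∀ x, π i (π j x) = 0)
    (hsum : ∀ x, ∑ i ∈ I, π i x = x) {S : Set (ι → R)} {B : Submodule R M}
    (hB : ∀ μ ∈ S, ∀ b ∈ B, diagonalOp I π μ b ∈ B) {ν : ι → R}
    (hν : ν ∈ Algebra.adjoin R S) : ∀ b ∈ B, diagonalOp I π ν b ∈ B := by
  induction hν using Algebra.adjoin_induction with
  | mem μ hμ => exact hB μ hμ
  | algebraMap c =>
    intro b hb
    rw [diagonalOp_algebraMap hsum, Module.algebraMap_end_apply]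
    exact B.smul_mem c hb
  | add μ ν _ _ hμ hν =>
    intro b hb
    rw [diagonalOp_add, LinearMap.add_apply]
    exact B.add_mem (hμ b hb) (hν b hb)
  | mul μ ν _ _ hμ hν =>
    intro b hb
    rw [diagonalOp_mul hidem horth, Module.End.mul_apply]
    exact hμ _ (hν b hb)

end DiagonalOp

theorem exists_mem_adjoin_ne_zero_eq_zero {ι R : Type*} [CommRing R] [IsDomain R]
    {I : Finset ι} {S : Set (ι → R)} (hS : ∀ i ∈ I, ∀ j ∈ I, i ≠ j → ∃ μ ∈ S, μ i ≠ μ j)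
    {i : ι} (hi : i ∈ I) :
    ∃ ν ∈ Algebra.adjoin R S, ν i ≠ 0 ∧ ∀ j ∈ I, j ≠ i → ν j = 0 := by
  classical
  choose! μ hμS hμ using fun j (hj : j ∈ I.erase i) =>
    hS i hi j (mem_of_mem_erase hj) (ne_of_mem_erase hj).symm
  refine ⟨∏ j ∈ I.erase i, (μ j - algebraMap R (ι → R) (μ j j)), ?_, ?_, ?_⟩
  · exact Subalgebra.prod_mem _ fun j hj =>
      sub_mem (Algebra.subset_adjoin (hμS j hj)) (Subalgebra.algebraMap_mem _ _)
  · simp only [prod_apply, Pi.sub_apply, Pi.algebraMap_apply, Algebra.algebraMap_self,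
      RingHom.id_apply]
    exact prod_ne_zero_iff.2 fun j hj => sub_ne_zero.2 (hμ j hj)
  · intro j hj hji
    simp only [prod_apply, Pi.sub_apply, Pi.algebraMap_apply, Algebra.algebraMap_self,
      RingHom.id_apply]
    exact prod_eq_zero (mem_erase.2 ⟨hji, hj⟩) (sub_self _)

theorem proj_mem_of_forall_diagonalOp_mem {ι K M : Type*} [Field K] [AddCommGroup M]
    [Module K M] {I : Finset ι} {π : ι → Module.End K M}
    (hidem : ∀ i ∈ I, ∀ x, π i (π i x) = π i x)
    (horth : ∀ i ∈ I, ∀ j ∈ I, i ≠ j → ∀ x, π i (π j x) = 0)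
    (hsum : ∀ x, ∑ i ∈ I, π i x = x) {S : Set (ι → K)}
    (hS : ∀ i ∈ I, ∀ j ∈ I, i ≠ j → ∃ μ ∈ S, μ i ≠ μ j) {B : Submodule K M}
    (hB : ∀ μ ∈ S, ∀ b ∈ B, diagonalOp I π μ b ∈ B) {b : M} (hb : b ∈ B) {i : ι}
    (hi : i ∈ I) : π i b ∈ B := by
  obtain ⟨ν, hνS, hνi, hνj⟩ := exists_mem_adjoin_ne_zero_eq_zero hS hi
  have hν : diagonalOp I π ν b = ν i • π i b := by
    rw [diagonalOp_apply, sum_eq_single_of_mem i hi]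
    intro j hj hji
    rw [hνj j hj hji, zero_smul]
  have := B.smul_mem (ν i)⁻¹ (diagonalOp_mem_of_mem_adjoin hidem horth hsum hB hνS b hb)
  rwa [hν, inv_smul_smul₀ hνi] at this

theorem eq_iSup_inf_of_proj_mem {ι R M : Type*} [Semiring R] [AddCommMonoid M] [Module R M]
    {I : Finset ι} {π : ι → Module.End R M} {N : ι → Submodule R M}
    (hmem : ∀ i ∈ I, ∀ x, π i x ∈ N i) (hsum : ∀ x, ∑ i ∈ I, π i x = x) {B : Submodule R M}
    (hB : ∀ b ∈ B, ∀ i ∈ I, π i b ∈ B) : B = ⨆ i ∈ I, B ⊓ N i := by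
  refine le_antisymm (fun b hb => ?_) (iSup₂_le fun i _ => inf_le_left)
  rw [← hsum b]
  exact Submodule.sum_mem _ fun i hi =>
    Submodule.mem_iSup_of_mem i (Submodule.mem_iSup_of_mem hi ⟨hB b hb i hi, hmem i hi b⟩)

theorem exists_ne_zero_pow_mul_conj_pow_ne {p q p' q' : ℕ} (h : p + q = p' + q')
    (hp : p ≠ p') : ∃ z : ℂ, z ≠ 0 ∧ z ^ p * conj z ^ q ≠ z ^ p' * conj z ^ q' := by
  set m := p + q' + (p' + q) + 1
  have hζ := Complex.isPrimitiveRoot_exp m (by omega)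
  set ζ := Complex.exp (2 * Real.pi * Complex.I / m)
  have hζ0 : ζ ≠ 0 := Complex.exp_ne_zero _
  refine ⟨ζ, hζ0, fun heq => hp ?_⟩
  rw [← Complex.inv_eq_conj (hζ.norm'_eq_one (by omega)), inv_pow, inv_pow] at heq
  have hpow : ζ ^ (p + q') = ζ ^ (p' + q) := by
    field_simp at heq
    rw [pow_add, pow_add]
    linear_combination heq
  have := hζ.pow_inj (by omega) (by omega) hpow
  omega

/-- core of the proof of Deligne's lemma, Lemma 3: if `M` is the internal
direct sum of subspaces `M^{p,q}` (with `p + q = k`) with projections `π^{p,q}`, and a subspace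
`B` is stable under all the operators `b ↦ Σ z^p conj(z)^q π^{p,q}(b)` for `z ≠ 0`, then `B`
contains the components `π^{p,q}(b)` of all its elements, i.e. `B` is the direct sum of its
intersections with the `M^{p,q}`. -/
theorem stable_subspace_splits
    (k : ℕ) (I : Finset (ℕ × ℕ)) (hI : ∀ pq ∈ I, pq.1 + pq.2 = k)
    (M : Type*) [AddCommGroup M] [Module ℂ M]
    (Mpq : ℕ × ℕ → Submodule ℂ M) (π : ℕ × ℕ → M →ₗ[ℂ] M)
    -- `π^{p,q}` maps into `M^{p,q}`
    (hmem : ∀ pq ∈ I, ∀ x : M, π pq x ∈ Mpq pq)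
    -- the projections sum to the identity
    (hsum : ∀ x : M, ∑ pq ∈ I, π pq x = x)
    -- `π^{p,q}` is the identity on `M^{p,q}` ...
    (hid : ∀ pq ∈ I, ∀ x ∈ Mpq pq, π pq x = x)
    -- ... and kills the other summands
    (hzero : ∀ pq ∈ I, ∀ pq' ∈ I, pq ≠ pq' → ∀ x ∈ Mpq pq', π pq x = 0)
    (B : Submodule ℂ M)
    (hB : ∀ z : ℂ, z ≠ 0 → ∀ b ∈ B,
      ∑ pq ∈ I, (z ^ pq.1 * (conj z) ^ pq.2) • π pq b ∈ B) :
    (∀ b ∈ B, ∀ pq ∈ I, π pq b ∈ B) ∧ B = ⨆ pq ∈ I, B ⊓ Mpq pq := by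
  let S : Set (ℕ × ℕ → ℂ) := (fun z pq => z ^ pq.1 * conj z ^ pq.2) '' {z | z ≠ 0}
  have hS : ∀ pq ∈ I, ∀ pq' ∈ I, pq ≠ pq' → ∃ μ ∈ S, μ pq ≠ μ pq' := by
    intro pq hpq pq' hpq' hne
    have hp : pq.1 ≠ pq'.1 := fun h =>
      hne (Prod.ext h (by have := hI pq hpq; have := hI pq' hpq'; omega))
    obtain ⟨z, hz, hzne⟩ :=
      exists_ne_zero_pow_mul_conj_pow_ne ((hI pq hpq).trans (hI pq' hpq').symm) hp
    exact ⟨_, ⟨z, hz, rfl⟩, hzne⟩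
  have hBS : ∀ μ ∈ S, ∀ b ∈ B, diagonalOp I π μ b ∈ B := by
    rintro _ ⟨z, hz, rfl⟩ b hb
    rw [diagonalOp_apply]
    exact hB z hz b hb
  have hsplit : ∀ b ∈ B, ∀ pq ∈ I, π pq b ∈ B := fun b hb pq hpq =>
    proj_mem_of_forall_diagonalOp_mem (fun pq hpq x => hid pq hpq _ (hmem pq hpq x))
      (fun pq hpq pq' hpq' hne x => hzero pq hpq pq' hpq' hne _ (hmem pq' hpq' x)) hsum hS hBS
      hb hpq
  exact ⟨hsplit, eq_iSup_inf_of_proj_mem hmem hsum hsplit⟩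
end
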